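/- Let T be a sublinear transition operator on ℬ. Then for every n ∈ ℕ, ‖(T^n − I) − n(T − I)‖ ≤ (n(n−1)/2)·‖T − I‖², where ‖·‖ denotes the operator seminorm and T^n is the n-fold composition of T with itself. -/

import Mathlib

open Filter Topology BoundedContinuousFunction ENNReal NNReal

/-- The space of (possibly nonlinear) operators on the Banach space `X →ᵇ ℝ`
of bounded (continuous, i.e. with `X` discrete: all) real-valued functions. -/
abbrev Op (X : Type*) [TopologicalSpace X] :=
  BoundedContinuousFunction X ℝ → BoundedContinuousFunction X ℝ

/-- The operator seminorm `‖A‖ = sup {‖A f‖/‖f‖ : f ≠ 0}`, a value in `[0,∞]`. -/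
noncomputable def opSemiNorm {X : Type*} [TopologicalSpace X] (A : Op X) : ℝ≥0∞ :=
  ⨆ (f : BoundedContinuousFunction X ℝ) (_ : f ≠ 0), (‖A f‖₊ : ℝ≥0∞) / (‖f‖₊ : ℝ≥0∞)

/-- The operator norm distance `d(A,B) = ‖A 0 − B 0‖∞ + ‖A − B‖`. -/
noncomputable def opDist {X : Type*} [TopologicalSpace X] (A B : Op X) : ℝ≥0∞ :=
  (‖A 0 - B 0‖₊ : ℝ≥0∞) + opSemiNorm (A - B)

/-- Sublinear transition operator: (T1) positive homogeneity, (T2) subadditivity,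
(T3) `T f ≤ sup f` pointwise. -/
def IsSublinearTransition {X : Type*} [TopologicalSpace X] (T : Op X) : Prop :=
  (∀ (c : ℝ), 0 ≤ c → ∀ f, T (c • f) = c • T f) ∧
  (∀ f g, ∀ x, T (f + g) x ≤ T f x + T g x) ∧
  (∀ f, ∀ x, T f x ≤ ⨆ y, f y)

/-- Sublinear rate operator: (Q1) positive homogeneity, (Q2) subadditivity,
(Q3) constants map to zero, (Q4) positive maximum principle. -/
def IsSublinearRate {X : Type*} [TopologicalSpace X] (Q : Op X) : Prop :=
  (∀ (c : ℝ), 0 ≤ c → ∀ f, Q (c • f) = c • Q f) ∧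
  (∀ f g, ∀ x, Q (f + g) x ≤ Q f x + Q g x) ∧
  (∀ (c : ℝ), Q (BoundedContinuousFunction.const X c) = 0) ∧
  (∀ f, ∀ x : X, (⨆ y, f y) = f x → 0 ≤ f x → Q f x ≤ 0)

/-- The Euler approximation `(I + (t/n) Q)^n` (n-fold composition). -/
noncomputable def euler {X : Type*} [TopologicalSpace X] (Q : Op X) (t : ℝ) (n : ℕ) : Op X :=
  (fun f => f + (t / (n : ℝ)) • Q f)^[n]

/-- Uniform continuity of a semigroup `(S_t)_{t ≥ 0}`:
`‖S_s − S_t‖ → 0` as `s → t` (within `s ≥ 0`), for every `t ≥ 0`. -/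
def IsUniformlyContinuousSG {X : Type*} [TopologicalSpace X] (S : ℝ → Op X) : Prop :=
  ∀ t : ℝ, 0 ≤ t →
    Tendsto (fun s => opSemiNorm (S s - S t)) (nhdsWithin t (Set.Ici 0)) (nhds 0)

/-- The indicator function `1_x` of the singleton `{x}`. -/
noncomputable def indic {X : Type*} [TopologicalSpace X] [DiscreteTopology X] (x : X) :
    BoundedContinuousFunction X ℝ :=
  BoundedContinuousFunction.ofNormedAddCommGroup
    (Set.indicator {x} (fun _ => (1 : ℝ))) continuous_of_discreteTopology 1
    (by
      intro y
      classical
      rw [Set.indicator_apply]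
      split_ifs <;> simp)

/-- Downward continuity (continuity from above) of an operator. -/
def DownwardContinuous {X : Type*} [TopologicalSpace X] (A : Op X) : Prop :=
  ∀ (f : ℕ → BoundedContinuousFunction X ℝ) (g : BoundedContinuousFunction X ℝ),
    (∀ n x, f (n + 1) x ≤ f n x) →
    (∀ x, Tendsto (fun n => f n x) atTop (nhds (g x))) →
    ∀ x, Tendsto (fun n => A (f n) x) atTop (nhds (A g x))

/-!
A sublinear transition operator `T` is nonexpansive, and subadditivity gives
`(T f - f) - (T g - g) ≤ T (f - g) - (f - g)` pointwise, so `S = T - I` is Lipschitz with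
constant `‖S‖`. Telescoping, `T^n f - f - n S f = ∑_{k<n} (S (T^k f) - S f)`, and since
`‖T^k f - f‖ ≤ k ‖S f‖` the `k`-th summand has norm at most `k ‖S‖² ‖f‖`; summing gives
`(n choose 2) ‖S‖² ‖f‖`.
-/

section Iterates

variable {E : Type*} [SeminormedAddCommGroup E] {T : E → E}

lemma LipschitzWith.norm_iterate_sub_le (hT : LipschitzWith 1 T) (n : ℕ) (f : E) :
    ‖T^[n] f - f‖ ≤ n * ‖T f - f‖ := by
  induction n with
  | zero => simp
  | succ n ih =>
    have hstep : ‖T^[n] (T f) - T^[n] f‖ ≤ ‖T f - f‖ := by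
      simpa using (hT.iterate n).norm_sub_le (T f) f
    calc ‖T^[n + 1] f - f‖ = ‖(T^[n] (T f) - T^[n] f) + (T^[n] f - f)‖ := by
          rw [Function.iterate_succ_apply, sub_add_sub_cancel]
      _ ≤ ‖T f - f‖ + n * ‖T f - f‖ := (norm_add_le _ _).trans (add_le_add hstep ih)
      _ = (n + 1 : ℕ) * ‖T f - f‖ := by push_cast; ring

lemma LipschitzWith.norm_iterate_sub_sub_nsmul_le {K : ℝ≥0} (hT : LipschitzWith 1 T)
    (hS : LipschitzWith K (T - id)) (n : ℕ) (f : E) :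
    ‖T^[n] f - f - n • (T f - f)‖ ≤ n.choose 2 * K * ‖T f - f‖ := by
  induction n with
  | zero => simp
  | succ n ih =>
    have hstep : ‖(T - id : E → E) (T^[n] f) - (T - id : E → E) f‖ ≤ n * K * ‖T f - f‖ :=
      calc _ ≤ K * ‖T^[n] f - f‖ := hS.norm_sub_le _ _
        _ ≤ K * (n * ‖T f - f‖) := by gcongr; exact hT.norm_iterate_sub_le n f
        _ = n * K * ‖T f - f‖ := by ring
    calc ‖T^[n + 1] f - f - (n + 1) • (T f - f)‖
        = ‖(T^[n] f - f - n • (T f - f))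
            + ((T - id : E → E) (T^[n] f) - (T - id : E → E) f)‖ := by
          rw [Function.iterate_succ_apply']
          congr 1
          simp only [Pi.sub_apply, id, succ_nsmul]
          abel
      _ ≤ n.choose 2 * K * ‖T f - f‖ + n * K * ‖T f - f‖ :=
          (norm_add_le _ _).trans (add_le_add ih hstep)
      _ = (n + 1).choose 2 * K * ‖T f - f‖ := by
          rw [Nat.choose_succ_succ, Nat.choose_one_right]; push_cast; ring

end Iterates

section OpSemiNorm

variable {X : Type*} [TopologicalSpace X] {A : Op X}

lemma opSemiNorm_le_ofReal {M : ℝ} (hM : 0 ≤ M) (h : ∀ f, ‖A f‖ ≤ M * ‖f‖) :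
    opSemiNorm A ≤ ENNReal.ofReal M := by
  refine iSup₂_le fun f _ => ENNReal.div_le_of_le_mul ?_
  calc (‖A f‖₊ : ℝ≥0∞) = ENNReal.ofReal ‖A f‖ := (ofReal_norm _).symm
    _ ≤ ENNReal.ofReal (M * ‖f‖) := ENNReal.ofReal_le_ofReal (h f)
    _ = ENNReal.ofReal M * ‖f‖₊ := by rw [ENNReal.ofReal_mul hM, ofReal_norm, enorm_eq_nnnorm]

lemma norm_apply_le_toReal_opSemiNorm_mul (hA : A 0 = 0) (hfin : opSemiNorm A ≠ ∞)
    (f : X →ᵇ ℝ) :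
    ‖A f‖ ≤ (opSemiNorm A).toReal * ‖f‖ := by
  rcases eq_or_ne f 0 with rfl | hf
  · simp [hA]
  have hdiv : (‖A f‖₊ : ℝ≥0∞) / ‖f‖₊ ≤ opSemiNorm A :=
    le_iSup₂ (f := fun g (_ : g ≠ 0) => (‖A g‖₊ : ℝ≥0∞) / ‖g‖₊) f hf
  have hmul : (‖A f‖₊ : ℝ≥0∞) ≤ opSemiNorm A * ‖f‖₊ :=
    (ENNReal.div_le_iff (by simpa using hf) ENNReal.coe_ne_top).mp hdiv
  simpa [ENNReal.toReal_mul] using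
    ENNReal.toReal_mono (ENNReal.mul_ne_top hfin ENNReal.coe_ne_top) hmul

lemma norm_sub_le_of_forall_apply_sub_le {F : Op X} {M : ℝ} (hM : 0 ≤ M)
    (h : ∀ f g x, F f x - F g x ≤ M * ‖f - g‖) (f g : X →ᵇ ℝ) : ‖F f - F g‖ ≤ M * ‖f - g‖ := by
  refine (BoundedContinuousFunction.norm_le (by positivity)).2 fun x => ?_
  rw [BoundedContinuousFunction.coe_sub, Pi.sub_apply, Real.norm_eq_abs, abs_sub_le_iff]
  exact ⟨h f g x, norm_sub_rev f g ▸ h g f x⟩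

end OpSemiNorm

namespace IsSublinearTransition

variable {X : Type*} [TopologicalSpace X] {T : Op X}

lemma map_zero (hT : IsSublinearTransition T) : T 0 = 0 := by
  simpa using hT.1 0 le_rfl 0

lemma sub_id_map_zero (hT : IsSublinearTransition T) : (T - id : Op X) 0 = 0 := by
  simp [hT.map_zero]

lemma sub_le_map_sub (hT : IsSublinearTransition T) (f g : X →ᵇ ℝ) (x : X) :
    T f x - T g x ≤ T (f - g) x := by
  have := hT.2.1 g (f - g) x
  rw [add_sub_cancel] at this
  linarith

lemma apply_le_norm (hT : IsSublinearTransition T) (f : X →ᵇ ℝ) (x : X) : T f x ≤ ‖f‖ :=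
  (hT.2.2 f x).trans <| Real.iSup_le (fun y => (le_abs_self _).trans (f.norm_coe_le_norm y))
    (norm_nonneg f)

lemma lipschitzWith_one (hT : IsSublinearTransition T) : LipschitzWith 1 T := by
  refine LipschitzWith.of_dist_le_mul fun f g => ?_
  simp only [dist_eq_norm, NNReal.coe_one, one_mul]
  simpa using norm_sub_le_of_forall_apply_sub_le zero_le_one
    (fun f g x => by simpa using (hT.sub_le_map_sub f g x).trans (hT.apply_le_norm _ x)) f g

lemma opSemiNorm_sub_id_ne_top (hT : IsSublinearTransition T) : opSemiNorm (T - id) ≠ ∞ := by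
  refine ne_top_of_le_ne_top ENNReal.ofReal_ne_top (opSemiNorm_le_ofReal zero_le_two fun f => ?_)
  have hTf : ‖T f‖ ≤ ‖f‖ := by simpa [hT.map_zero] using hT.lipschitzWith_one.norm_sub_le f 0
  calc ‖T f - f‖ ≤ ‖T f‖ + ‖f‖ := norm_sub_le _ _
    _ ≤ 2 * ‖f‖ := by linarith

lemma lipschitzWith_sub_id (hT : IsSublinearTransition T) :
    LipschitzWith (opSemiNorm (T - id)).toNNReal (T - id) := by
  refine LipschitzWith.of_dist_le_mul fun f g => ?_
  rw [dist_eq_norm, dist_eq_norm, ENNReal.coe_toNNReal_eq_toReal]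
  refine norm_sub_le_of_forall_apply_sub_le ENNReal.toReal_nonneg (fun f g x => ?_) f g
  calc (T - id : Op X) f x - (T - id : Op X) g x = (T f x - T g x) - (f - g) x := by simp; ring
    _ ≤ (T - id : Op X) (f - g) x := by simpa using hT.sub_le_map_sub f g x
    _ ≤ ‖(T - id : Op X) (f - g)‖ :=
        (le_abs_self _).trans (Real.norm_eq_abs _ ▸ norm_coe_le_norm _ x)
    _ ≤ _ := norm_apply_le_toReal_opSemiNorm_mul hT.sub_id_map_zero hT.opSemiNorm_sub_id_ne_top _

end IsSublinearTransition

theorem stmt_14_general {X : Type*} [TopologicalSpace X]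
    (T : Op X) (hT : IsSublinearTransition T) (n : ℕ) :
    opSemiNorm ((T^[n] - id) - (n : ℝ) • (T - id))
      ≤ ENNReal.ofReal ((n : ℝ) * ((n : ℝ) - 1) / 2) * opSemiNorm (T - id) ^ 2 := by
  set c := opSemiNorm (T - id)
  have hc : c ≠ ∞ := hT.opSemiNorm_sub_id_ne_top
  have hbound : ∀ f, ‖((T^[n] - id) - (n : ℝ) • (T - id) : Op X) f‖
      ≤ n.choose 2 * c.toReal ^ 2 * ‖f‖ := by
    intro f
    have hTf : ‖T f - f‖ ≤ c.toReal * ‖f‖ :=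
      norm_apply_le_toReal_opSemiNorm_mul hT.sub_id_map_zero hc f
    calc ‖T^[n] f - f - (n : ℝ) • (T f - f)‖ ≤ n.choose 2 * c.toReal * ‖T f - f‖ := by
          rw [Nat.cast_smul_eq_nsmul, ← ENNReal.coe_toNNReal_eq_toReal]
          exact hT.lipschitzWith_one.norm_iterate_sub_sub_nsmul_le hT.lipschitzWith_sub_id n f
      _ ≤ n.choose 2 * c.toReal * (c.toReal * ‖f‖) := by gcongr
      _ = n.choose 2 * c.toReal ^ 2 * ‖f‖ := by ring
  calc opSemiNorm ((T^[n] - id) - (n : ℝ) • (T - id))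
      ≤ ENNReal.ofReal (n.choose 2 * c.toReal ^ 2) := opSemiNorm_le_ofReal (by positivity) hbound
    _ = ENNReal.ofReal ((n : ℝ) * ((n : ℝ) - 1) / 2) * c ^ 2 := by
      rw [ENNReal.ofReal_mul (by positivity), ENNReal.ofReal_pow ENNReal.toReal_nonneg,
        ENNReal.ofReal_toReal hc, Nat.cast_choose_two]

theorem stmt_14 {X : Type*} [Countable X] [TopologicalSpace X] [DiscreteTopology X]
    (T : Op X) (hT : IsSublinearTransition T) (n : ℕ) :
    opSemiNorm ((T^[n] - id) - (n : ℝ) • (T - id))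
      ≤ ENNReal.ofReal ((n : ℝ) * ((n : ℝ) - 1) / 2) * opSemiNorm (T - id) ^ 2 :=
  stmt_14_general T hT n
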